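/- arXiv:0905.0385 — 2 statements merged into one kernel-verified Lean document; each statement's English description precedes it below -/
import Mathlib

section
/- Let 0 ≤ α ≤ 5/8 and 1 − 7α/5 ≤ d ≤ 1 − α. Then the optimized symmetric Han–Kobayashi multiplexing gain satisfies r_HK(α,d) = (3 − α − 3d)/4, and this value is attained at the power split v = (3α + d − 1)/2, i.e. r((3α + d − 1)/2) = (3 − α − 3d)/4. -/
/-- The no-outage triangle `S_d = {(x,y) : x ≥ 0, y ≥ 0, x + y ≤ d}`. -/
def Sd (d : ℝ) : Set (ℝ × ℝ) := {p : ℝ × ℝ | 0 ≤ p.1 ∧ 0 ≤ p.2 ∧ p.1 + p.2 ≤ d}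

/-- Compound constraint `a₁(v) = inf_{(x,y)∈S_d} (1 - x - v - (α - v - y)⁺)⁺`. -/
noncomputable def a1 (α d v : ℝ) : ℝ :=
  sInf {z : ℝ | ∃ p ∈ Sd d, z = max (1 - p.1 - v - max (α - v - p.2) 0) 0}

/-- Compound constraint `a₂(v) = inf_{(x,y)∈S_d} (1 - x - (α - v - y)⁺)⁺`. -/
noncomputable def a2 (α d v : ℝ) : ℝ :=
  sInf {z : ℝ | ∃ p ∈ Sd d, z = max (1 - p.1 - max (α - v - p.2) 0) 0}

/-- Compound constraint `a₃(v) = inf_{(x,y)∈S_d} (max(1 - x - v, α - y) - (α - v - y)⁺)⁺`. -/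
noncomputable def a3 (α d v : ℝ) : ℝ :=
  sInf {z : ℝ | ∃ p ∈ Sd d, z = max (max (1 - p.1 - v) (α - p.2) - max (α - v - p.2) 0) 0}

/-- Compound constraint `a₄(v) = inf_{(x,y)∈S_d} (max(1 - x, α - y) - (α - v - y)⁺)⁺`. -/
noncomputable def a4 (α d v : ℝ) : ℝ :=
  sInf {z : ℝ | ∃ p ∈ Sd d, z = max (max (1 - p.1) (α - p.2) - max (α - v - p.2) 0) 0}

/-- Symmetric Han–Kobayashi multiplexing gain with power split `v`:
`r(v) = min{a₂, (a₁+a₄)/2, a₃, (a₁+a₃+a₄)/3}`. -/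
noncomputable def rHKsplit (α d v : ℝ) : ℝ :=
  min (a2 α d v)
    (min ((a1 α d v + a4 α d v) / 2)
      (min (a3 α d v) ((a1 α d v + a3 α d v + a4 α d v) / 3)))

/-- Optimized symmetric Han–Kobayashi multiplexing gain `r_HK(α,d) = sup_{v ≥ 0} r(v)`. -/
noncomputable def rHK (α d : ℝ) : ℝ := sSup {z : ℝ | ∃ v : ℝ, 0 ≤ v ∧ z = rHKsplit α d v}

/-!
At the split `v* = (3α + d - 1)/2` every constraint is computed by minimising a piecewise-linear
function over the triangle: `a₁ = 1 - α - d`, `a₂ = a₄ = 1 - α - d + v` (worst point `(d, 0)`), and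
`a₃ = (1 + α - d - v)/2`, the worst point being the one of the edge `x + y = d` where
`1 - x - v = α - y`; the lower bound `1 - 7α/5 ≤ d` is exactly what keeps the other branch of `a₃`
(of value `v`) from being smaller. The binding constraints are `(a₁ + a₄)/2`, increasing in `v`, and
`a₃`, decreasing in `v`; they cross at `v*`. For `v > 1 + d - α` the balanced point leaves the
triangle and the corner `(0, d)` bounds `a₃` by `α - d`, which is below the claimed value because
`α ≤ 5/8`.
-/

section PosPartInf

variable {ι : Type*} {S : Set ι} {f : ι → ℝ} {c : ℝ}

noncomputable def posPartInf (S : Set ι) (f : ι → ℝ) : ℝ :=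
  sInf {z : ℝ | ∃ p ∈ S, z = max (f p) 0}

lemma posPartInf_le {p : ι} (hp : p ∈ S) (hfp : f p ≤ c) (hc : 0 ≤ c) :
    posPartInf S f ≤ c := by
  have hbdd : BddBelow {z : ℝ | ∃ p ∈ S, z = max (f p) 0} := by
    refine ⟨0, ?_⟩
    rintro z ⟨q, -, rfl⟩
    exact le_max_right _ _
  exact (csInf_le hbdd ⟨p, hp, rfl⟩).trans (max_le hfp hc)

lemma le_posPartInf (hS : S.Nonempty) (h : ∀ q ∈ S, c ≤ f q) : c ≤ posPartInf S f := by
  unfold posPartInf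
  obtain ⟨p, hp⟩ := hS
  refine le_csInf ⟨_, p, hp, rfl⟩ ?_
  rintro z ⟨q, hq, rfl⟩
  exact (h q hq).trans (le_max_left _ _)

end PosPartInf

section Constraints

variable {α d : ℝ}

lemma mk_mem_Sd {x y : ℝ} (hx : 0 ≤ x) (hy : 0 ≤ y) (hxy : x + y ≤ d) : (x, y) ∈ Sd d :=
  ⟨hx, hy, hxy⟩

lemma Sd_nonempty (hd : 0 ≤ d) : (Sd d).Nonempty :=
  ⟨(0, 0), mk_mem_Sd le_rfl le_rfl (by simpa using hd)⟩

lemma a1_le (hd : 0 ≤ d) (hαd : α + d ≤ 1) (v : ℝ) : a1 α d v ≤ 1 - α - d :=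
  posPartInf_le (mk_mem_Sd hd le_rfl (by simp))
    (by dsimp only; linarith [le_max_left (α - v - 0) 0]) (by linarith)

lemma a4_le (hd : 0 ≤ d) (hαd : α + d ≤ 1) {v : ℝ} (hv : 0 ≤ v) : a4 α d v ≤ 1 - α - d + v := by
  refine posPartInf_le (mk_mem_Sd hd le_rfl (by simp)) ?_ (by linarith)
  dsimp only
  rw [max_eq_left (by linarith : α - 0 ≤ 1 - d)]
  linarith [le_max_left (α - v - 0) 0]

lemma a3_le_of_balanced {v : ℝ} (hv₁ : 1 - α - d ≤ v) (hv₂ : v ≤ 1 + d - α) :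
    a3 α d v ≤ max ((1 + α - d - v) / 2) 0 := by
  refine posPartInf_le (mk_mem_Sd (x := (1 + d - v - α) / 2) (y := (d - 1 + v + α) / 2)
    (by linarith) (by linarith) (by linarith)) ?_ (le_max_right _ _)
  dsimp only
  have hmax :
      max (1 - (1 + d - v - α) / 2 - v) (α - (d - 1 + v + α) / 2) = (1 + α - d - v) / 2 := by
    rw [max_eq_left (by linarith)]; ring
  rw [hmax]
  linarith [le_max_right (α - v - (d - 1 + v + α) / 2) 0, le_max_left ((1 + α - d - v) / 2) 0]

lemma a3_le_of_corner (hd : 0 ≤ d) (v : ℝ) : a3 α d v ≤ max (max (1 - v) (α - d)) 0 := by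
  refine posPartInf_le (mk_mem_Sd le_rfl hd (by simp)) ?_ (le_max_right _ _)
  simp only [sub_zero]
  linarith [le_max_right (α - v - d) 0, le_max_left (max (1 - v) (α - d)) 0]

lemma le_a1 (hd : 0 ≤ d) {v : ℝ} (hvα : v ≤ α) : 1 - α - d ≤ a1 α d v := by
  refine le_posPartInf (Sd_nonempty hd) ?_
  rintro ⟨x, y⟩ ⟨hx, hy, hxy⟩
  dsimp only at hx hy hxy ⊢
  linarith [max_le (by linarith : α - v - y ≤ α - v) (by linarith : (0 : ℝ) ≤ α - v)]

lemma le_a2 (hd : 0 ≤ d) {v : ℝ} (hvα : v ≤ α) : 1 - α - d + v ≤ a2 α d v := by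
  refine le_posPartInf (Sd_nonempty hd) ?_
  rintro ⟨x, y⟩ ⟨hx, hy, hxy⟩
  dsimp only at hx hy hxy ⊢
  linarith [max_le (by linarith : α - v - y ≤ α - v) (by linarith : (0 : ℝ) ≤ α - v)]

lemma le_a4 (hd : 0 ≤ d) {v : ℝ} (hvα : v ≤ α) : 1 - α - d + v ≤ a4 α d v := by
  refine le_posPartInf (Sd_nonempty hd) ?_
  rintro ⟨x, y⟩ ⟨hx, hy, hxy⟩
  dsimp only at hx hy hxy ⊢
  linarith [le_max_left (1 - x) (α - y),
    max_le (by linarith : α - v - y ≤ α - v) (by linarith : (0 : ℝ) ≤ α - v)]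

lemma le_a3 (hd : 0 ≤ d) {v : ℝ} (hv : 1 + α - d ≤ 3 * v) : (1 + α - d - v) / 2 ≤ a3 α d v := by
  refine le_posPartInf (Sd_nonempty hd) ?_
  rintro ⟨x, y⟩ ⟨hx, hy, hxy⟩
  dsimp only at hx hy hxy ⊢
  have h₁ := le_max_left (1 - x - v) (α - y)
  have h₂ := le_max_right (1 - x - v) (α - y)
  rcases le_or_gt (α - v - y) 0 with h | h
  · rw [max_eq_right h]; linarith
  · rw [max_eq_left h.le]; linarith

end Constraints

section Optimum

variable {α d : ℝ}

lemma rHKsplit_le_of_le_split (hd : 0 ≤ d) (hαd : α + d ≤ 1) {v : ℝ} (hv₀ : 0 ≤ v)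
    (hv : v ≤ (3 * α + d - 1) / 2) : rHKsplit α d v ≤ (3 - α - 3 * d) / 4 := by
  have h14 : (a1 α d v + a4 α d v) / 2 ≤ (3 - α - 3 * d) / 4 := by
    linarith [a1_le hd hαd v, a4_le hd hαd hv₀]
  exact (min_le_right _ _).trans ((min_le_left _ _).trans h14)

lemma a3_le_of_split_le (hα₁ : 0 ≤ α) (hα₂ : α ≤ 5 / 8) (hd₁ : 1 - 7 * α / 5 ≤ d)
    (hd₂ : d ≤ 1 - α) {v : ℝ} (hv : (3 * α + d - 1) / 2 ≤ v) :
    a3 α d v ≤ (3 - α - 3 * d) / 4 := by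
  have hd : 0 ≤ d := by linarith
  rcases le_or_gt v (1 + d - α) with hv' | hv'
  · exact (a3_le_of_balanced (by linarith) hv').trans
      (max_le (by linarith) (by linarith))
  · exact (a3_le_of_corner hd v).trans
      (max_le (max_le (by linarith) (by linarith)) (by linarith))

lemma rHKsplit_le (hα₁ : 0 ≤ α) (hα₂ : α ≤ 5 / 8) (hd₁ : 1 - 7 * α / 5 ≤ d) (hd₂ : d ≤ 1 - α) {v : ℝ}
    (hv₀ : 0 ≤ v) : rHKsplit α d v ≤ (3 - α - 3 * d) / 4 := by
  have hd : 0 ≤ d := by linarith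
  rcases le_total v ((3 * α + d - 1) / 2) with hv | hv
  · exact rHKsplit_le_of_le_split hd (by linarith) hv₀ hv
  · exact (min_le_right _ _).trans ((min_le_right _ _).trans
      ((min_le_left _ _).trans (a3_le_of_split_le hα₁ hα₂ hd₁ hd₂ hv)))

lemma le_rHKsplit_split (hα₁ : 0 ≤ α) (hα₂ : α ≤ 5 / 8) (hd₁ : 1 - 7 * α / 5 ≤ d)
    (hd₂ : d ≤ 1 - α) : (3 - α - 3 * d) / 4 ≤ rHKsplit α d ((3 * α + d - 1) / 2) := by
  have hd : 0 ≤ d := by linarith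
  have hvα : (3 * α + d - 1) / 2 ≤ α := by linarith
  have h1 := le_a1 hd hvα
  have h2 := le_a2 hd hvα
  have h3 := le_a3 (α := α) hd (v := (3 * α + d - 1) / 2) (by linarith)
  have h4 := le_a4 hd hvα
  exact le_min (by linarith) (le_min (by linarith) (le_min (by linarith) (by linarith)))

end Optimum

/-- For `0 ≤ α ≤ 5/8` and `1 - 7α/5 ≤ d ≤ 1 - α`,
`r_HK(α,d) = (3 - α - 3d)/4`, attained at the power split `v = (3α + d - 1)/2`. -/
theorem stmt_8 (α d : ℝ) (hα₁ : 0 ≤ α) (hα₂ : α ≤ 5/8)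
    (hd₁ : 1 - 7*α/5 ≤ d) (hd₂ : d ≤ 1 - α) :
    rHK α d = (3 - α - 3*d) / 4 ∧ rHKsplit α d ((3*α + d - 1)/2) = (3 - α - 3*d) / 4 := by
  have hsplit : rHKsplit α d ((3*α + d - 1)/2) = (3 - α - 3*d) / 4 :=
    le_antisymm (rHKsplit_le hα₁ hα₂ hd₁ hd₂ (by linarith)) (le_rHKsplit_split hα₁ hα₂ hd₁ hd₂)
  refine ⟨IsGreatest.csSup_eq ⟨⟨_, by linarith, hsplit.symm⟩, ?_⟩, hsplit⟩
  rintro z ⟨v, hv, rfl⟩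
  exact rHKsplit_le hα₁ hα₂ hd₁ hd₂ hv
end

section
/- Let 0 ≤ α ≤ 5/8 and max(α − 1/2, 1 − 2α) ≤ d ≤ 1 − 7α/5. Then the optimized symmetric Han–Kobayashi multiplexing gain satisfies r_HK(α,d) = (1 + α − d)/3, and this value is attained at the power split v = (1 + α − d)/3, i.e. r((1 + α − d)/3) = (1 + α − d)/3. -/
/-!
At the power split `v = (1 + α - d)/3` the worst channel state for each of `a₁, a₂, a₄` is the
corner `(x, y) = (d, 0)`, giving `a₁ = 1 - d - α` and `a₂ = a₄ = 1 - d - α + v`, while `a₃ = v`;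
the bound `d ≤ 1 - 7α/5` is exactly `v ≤ 2 a₁`, so `r(v) = a₃(v) = v`. Conversely
`a₃(v) ≤ (1 + α - d)/3` for every `v ≥ 0`: for small `v` use the corner `(d, 0)`, for
`v ≥ 1 + d - α` the corner `(0, d)`, and in between the boundary point with
`y = (α + d + v - 1)/2`, which balances the two terms of the maximum.
-/

section PosPartInf

variable {d c : ℝ} {f : ℝ × ℝ → ℝ}

lemma sInf_posPart_le {p : ℝ × ℝ} (hp : p ∈ Sd d) (hfp : f p ≤ c) (hc : 0 ≤ c) :
    sInf {z : ℝ | ∃ p ∈ Sd d, z = max (f p) 0} ≤ c :=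
  csInf_le_of_le ⟨0, by rintro _ ⟨q, _, rfl⟩; exact le_max_right _ _⟩ ⟨p, hp, rfl⟩ (max_le hfp hc)

lemma sInf_posPart_eq {p : ℝ × ℝ} (hp : p ∈ Sd d) (hfp : f p = c) (hc : 0 ≤ c)
    (hf : ∀ q ∈ Sd d, c ≤ f q) :
    sInf {z : ℝ | ∃ p ∈ Sd d, z = max (f p) 0} = c :=
  IsLeast.csInf_eq ⟨⟨p, hp, by rw [hfp, max_eq_left hc]⟩,
    by rintro _ ⟨q, hq, rfl⟩; exact le_max_of_le_left (hf q hq)⟩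

end PosPartInf

lemma corner_mem_Sd {d : ℝ} (hd : 0 ≤ d) : (d, 0) ∈ Sd d := ⟨hd, le_rfl, by simp⟩

lemma posPart_interference_le {α d v : ℝ} {p : ℝ × ℝ} (hv : v ≤ α) (hp : p ∈ Sd d) :
    max (α - v - p.2) 0 ≤ α - v + d - p.1 :=
  max_le (by linarith [hp.2.1, hp.2.2]) (by linarith [hp.2.2, hp.2.1])

section Constraints

variable {α d v : ℝ}

lemma a1_eq (hd : 0 ≤ d) (hv : v ≤ α) (hdα : d + α ≤ 1) : a1 α d v = 1 - d - α := by
  refine sInf_posPart_eq (corner_mem_Sd hd) ?_ (by linarith) ?_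
  · simp only [sub_zero, max_eq_left (sub_nonneg.mpr hv)]
    ring
  · rintro ⟨x, y⟩ ⟨hx, hy, hxy⟩
    have := posPart_interference_le (d := d) hv ⟨hx, hy, hxy⟩
    dsimp only at this ⊢
    linarith

lemma a2_eq (hd : 0 ≤ d) (hv₀ : 0 ≤ v) (hv : v ≤ α) (hdα : d + α ≤ 1) :
    a2 α d v = 1 - d - α + v := by
  refine sInf_posPart_eq (corner_mem_Sd hd) ?_ (by linarith) ?_
  · simp only [sub_zero, max_eq_left (sub_nonneg.mpr hv)]
    ring
  · rintro ⟨x, y⟩ ⟨hx, hy, hxy⟩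
    have := posPart_interference_le (d := d) hv ⟨hx, hy, hxy⟩
    dsimp only at this ⊢
    linarith

lemma a3_eq (hd : 0 ≤ d) (hv₀ : 0 ≤ v) (hv : v ≤ α) (hv₃ : 3 * v ≤ 1 + α - d) :
    a3 α d v = max (1 - d - α) v := by
  refine sInf_posPart_eq (corner_mem_Sd hd) ?_ (le_max_of_le_right hv₀) ?_
  · simp only [sub_zero, max_eq_left (sub_nonneg.mpr hv)]
    rw [← max_sub_sub_right]
    congr 1 <;> ring
  · rintro ⟨x, y⟩ ⟨hx, hy, hxy⟩
    dsimp only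
    rcases le_total (α - v - y) 0 with hyv | hyv
    · rw [max_eq_right hyv, sub_zero]
      refine max_le (le_max_of_le_left (by linarith)) ?_
      rcases le_total v (α - y) with hvy | hvy
      · exact le_max_of_le_right hvy
      · exact le_max_of_le_left (by linarith)
    · rw [max_eq_left hyv]
      exact max_le (by linarith [le_max_left (1 - x - v) (α - y)])
        (by linarith [le_max_right (1 - x - v) (α - y)])

lemma a4_eq (hd : 0 ≤ d) (hv₀ : 0 ≤ v) (hv : v ≤ α) (hdα : d + α ≤ 1) :
    a4 α d v = 1 - d - α + v := by
  refine sInf_posPart_eq (corner_mem_Sd hd) ?_ (by linarith) ?_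
  · simp only [sub_zero, max_eq_left (sub_nonneg.mpr hv), max_eq_left (by linarith : α ≤ 1 - d)]
    ring
  · rintro ⟨x, y⟩ ⟨hx, hy, hxy⟩
    have := posPart_interference_le (d := d) hv ⟨hx, hy, hxy⟩
    dsimp only at this ⊢
    linarith [le_max_left (1 - x) (α - y)]

end Constraints

lemma a3_le_third {α d v : ℝ} (hd₁ : α - 1/2 ≤ d) (hd₂ : 1 - 2*α ≤ d) (hd₃ : d ≤ 1 + α)
    (hv₀ : 0 ≤ v) :
    a3 α d v ≤ (1 + α - d) / 3 := by
  have hd : 0 ≤ d := by linarith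
  rcases le_total (3 * v) (1 + α - d) with hv | hv
  · rw [a3_eq hd hv₀ (by linarith) hv]
    exact max_le (by linarith) (by linarith)
  rcases le_total v (1 + d - α) with hv' | hv'
  · set y := (α + d + v - 1) / 2 with hy
    refine sInf_posPart_le (p := (d - y, y)) ⟨by linarith, by linarith, by simp⟩ ?_ (by linarith)
    dsimp only
    rw [max_eq_right (by linarith : α - v - y ≤ 0), sub_zero]
    exact max_le (by linarith) (by linarith)
  · refine sInf_posPart_le (p := (0, d)) ⟨le_rfl, hd, by simp⟩ ?_ (by linarith)
    dsimp only
    rw [max_eq_right (by linarith : α - v - d ≤ 0), sub_zero]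
    exact max_le (by linarith) (by linarith)

lemma rHKsplit_le_a3 (α d v : ℝ) : rHKsplit α d v ≤ a3 α d v :=
  (min_le_right _ _).trans ((min_le_right _ _).trans (min_le_left _ _))

lemma rHKsplit_third {α d : ℝ} (hd₁ : α - 1/2 ≤ d) (hd₂ : 1 - 2*α ≤ d) (hd₃ : d ≤ 1 - 7*α/5) :
    rHKsplit α d ((1 + α - d) / 3) = (1 + α - d) / 3 := by
  set v := (1 + α - d) / 3 with hv_def
  have hd : 0 ≤ d := by linarith
  have hv₀ : 0 ≤ v := by linarith
  have hv : v ≤ α := by linarith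
  have hdα : d + α ≤ 1 := by linarith
  have hv₂ : v ≤ 2 * (1 - d - α) := by linarith
  rw [rHKsplit, a1_eq hd hv hdα, a2_eq hd hv₀ hv hdα, a3_eq hd hv₀ hv (by linarith),
    a4_eq hd hv₀ hv hdα, max_eq_right (by linarith), min_eq_left (a := v) (by linarith),
    min_eq_right (b := v) (by linarith), min_eq_right (by linarith)]

theorem stmt_9_general (α d : ℝ)
    (hd₁ : max (α - 1/2) (1 - 2*α) ≤ d) (hd₂ : d ≤ 1 - 7*α/5) :
    rHK α d = (1 + α - d) / 3 ∧ rHKsplit α d ((1 + α - d)/3) = (1 + α - d) / 3 := by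
  obtain ⟨hd₁a, hd₁b⟩ := max_le_iff.mp hd₁
  have hsplit := rHKsplit_third hd₁a hd₁b hd₂
  refine ⟨IsGreatest.csSup_eq ⟨⟨_, by linarith, hsplit.symm⟩, ?_⟩, hsplit⟩
  rintro _ ⟨v, hv, rfl⟩
  exact (rHKsplit_le_a3 α d v).trans (a3_le_third hd₁a hd₁b (by linarith) hv)

/-- For `0 ≤ α ≤ 5/8` and `max(α - 1/2, 1 - 2α) ≤ d ≤ 1 - 7α/5`,
`r_HK(α,d) = (1 + α - d)/3`, attained at the power split `v = (1 + α - d)/3`. -/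
theorem stmt_9 (α d : ℝ) (hα₁ : 0 ≤ α) (hα₂ : α ≤ 5/8)
    (hd₁ : max (α - 1/2) (1 - 2*α) ≤ d) (hd₂ : d ≤ 1 - 7*α/5) :
    rHK α d = (1 + α - d) / 3 ∧ rHKsplit α d ((1 + α - d)/3) = (1 + α - d) / 3 :=
  stmt_9_general α d hd₁ hd₂
end
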